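/- Let Y be an n×n lower triangular (0,1)-matrix with unit diagonal and Z = YY^T. Then ρ(Z^{-1}) ≤ ρ(Z_0^{-1}) where Z_0 = Y_0 Y_0^T with (Y_0)_{ij} = 0 if i < j, 1 if i = j, 1 if i > j with i+j odd, 0 otherwise, and ρ denotes spectral radius. -/

import Mathlib

/-!
Write `V = Y⁻¹`, so that `Z⁻¹ = Vᵀ V` and, by the C⋆-identity, `ρ(Z⁻¹) = ‖V‖²` for the spectral
norm. Solving `Y V = 1` column by column, each new entry of a column is minus a 0/1-weighted sum of
the earlier ones, hence lies between minus the sum `P` of their positive parts and the sum `Q` of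
their negative parts. Tracking `P` and `Q` gives the Fibonacci bound `|V i j| ≤ F(i - j)`, where
`F = 1, 1, 1, 2, 3, 5, …`. The matrix `Y₀` attains it: `Y₀` and `Y₀⁻¹` are lower triangular
Toeplitz matrices, i.e. truncated power series, and the series of `Y₀⁻¹` is `∑ (-1)ᵏ F(k) Xᵏ`.
So `‖V‖ ≤ ‖(F(i - j))ᵢⱼ‖ = ‖Y₀⁻¹‖`: the first step because the spectral norm is monotone under
entrywise domination by a nonnegative matrix, the second because `Y₀⁻¹` is `(F(i - j))ᵢⱼ`
conjugated by the unitary `diag((-1)ⁱ)`.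
-/

open Matrix

open scoped ENNReal

/-- The spectral radius of a real matrix, i.e. the largest modulus of a
complex eigenvalue. -/
noncomputable def specRad {n : ℕ} (A : Matrix (Fin n) (Fin n) ℝ) : ℝ≥0∞ :=
  spectralRadius ℂ (A.map (algebraMap ℝ ℂ))

open Finset PowerSeries

def fibBound : ℕ → ℕ
  | 0 => 1
  | d + 1 => Nat.fib (d + 1)

section FibonacciBound

variable {α : Type*} [Field α] [LinearOrder α] [IsStrictOrderedRing α]

theorem neg_sum_mul_mem_Icc {ι : Type*} (s : Finset ι) {c v : ι → α}
    (hc : ∀ k ∈ s, c k ∈ Set.Icc 0 1) :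
    -∑ k ∈ s, c k * v k ∈ Set.Icc (-∑ k ∈ s, (v k)⁺) (∑ k ∈ s, (v k)⁻) := by
  rw [Set.mem_Icc, neg_le_neg_iff, neg_le, ← sum_neg_distrib]
  constructor <;> refine sum_le_sum fun k hk => ?_ <;> obtain ⟨h0, h1⟩ := hc k hk
  · calc c k * v k ≤ c k * (v k)⁺ := mul_le_mul_of_nonneg_left (le_posPart _) h0
      _ ≤ (v k)⁺ := mul_le_of_le_one_left (posPart_nonneg _) h1
  · calc -(v k)⁻ ≤ -(c k * (v k)⁻) := neg_le_neg (mul_le_of_le_one_left (negPart_nonneg _) h1)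
      _ = c k * -(v k)⁻ := (mul_neg _ _).symm
      _ ≤ c k * v k := mul_le_mul_of_nonneg_left (neg_le.1 (neg_le_negPart _)) h0

theorem sum_posPart_negPart_le_fib_of_eq_neg_sum {v : ℕ → α} {c : ℕ → ℕ → α} {j N : ℕ}
    (hc : ∀ m k, c m k ∈ Set.Icc 0 1) (hlow : ∀ k < j, v k = 0) (hj : |v j| ≤ 1)
    (hrec : ∀ m, j < m → m < N → v m = -∑ k ∈ range m, c m k * v k) (d : ℕ)
    (hd : j + d < N) :
    let P := ∑ k ∈ range (j + d + 1), (v k)⁺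
    let Q := ∑ k ∈ range (j + d + 1), (v k)⁻
    P ≤ Nat.fib (d + 1) ∧ Q ≤ Nat.fib (d + 1) ∧ P + Q ≤ Nat.fib (d + 2) := by
  induction d with
  | zero =>
    have hprefix : ∀ k ∈ range j, (v k)⁺ = 0 ∧ (v k)⁻ = 0 := fun k hk => by
      simp [hlow k (mem_range.1 hk)]
    simp only [add_zero, sum_range_succ, sum_eq_zero fun k hk => (hprefix k hk).1,
      sum_eq_zero fun k hk => (hprefix k hk).2, zero_add, Nat.fib_one, Nat.fib_two, Nat.cast_one,
      posPart_add_negPart]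
    have := posPart_add_negPart (v j)
    exact ⟨by linarith [negPart_nonneg (v j)], by linarith [posPart_nonneg (v j)], hj⟩
  | succ d ih =>
    set P := ∑ k ∈ range (j + d + 1), (v k)⁺
    set Q := ∑ k ∈ range (j + d + 1), (v k)⁻
    obtain ⟨hP, hQ, hPQ⟩ := ih (by omega)
    obtain ⟨hlo, hhi⟩ := hrec (j + d + 1) (by omega) hd ▸ neg_sum_mul_mem_Icc (v := v)
      (range (j + d + 1)) fun k _ => hc (j + d + 1) k
    have hpos : (v (j + d + 1))⁺ ≤ Q := sup_le hhi (sum_nonneg fun k _ => negPart_nonneg _)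
    have hneg : (v (j + d + 1))⁻ ≤ P :=
      sup_le (neg_le.1 hlo) (sum_nonneg fun k _ => posPart_nonneg _)
    have habs : |v (j + d + 1)| ≤ Nat.fib (d + 1) := abs_le.2 ⟨by linarith, by linarith⟩
    have hfib : (Nat.fib (d + 1 + 2) : α) = Nat.fib (d + 2) + Nat.fib (d + 1) := by
      rw [Nat.fib_add_two, Nat.cast_add, add_comm]
    simp only [← add_assoc j d 1, sum_range_succ _ (j + d + 1), hfib]
    refine ⟨by linarith, by linarith, ?_⟩
    linarith [posPart_add_negPart (v (j + d + 1))]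

theorem abs_le_fibBound_of_eq_neg_sum {v : ℕ → α} {c : ℕ → ℕ → α} {j N : ℕ}
    (hc : ∀ m k, c m k ∈ Set.Icc 0 1) (hlow : ∀ k < j, v k = 0) (hj : |v j| ≤ 1)
    (hrec : ∀ m, j < m → m < N → v m = -∑ k ∈ range m, c m k * v k) (d : ℕ)
    (hd : j + d < N) : |v (j + d)| ≤ fibBound d := by
  rcases d with _ | d
  · simpa [fibBound] using hj
  obtain ⟨hP, hQ, -⟩ := sum_posPart_negPart_le_fib_of_eq_neg_sum hc hlow hj hrec d (by omega)
  obtain ⟨hlo, hhi⟩ := hrec (j + d + 1) (by omega) (by omega) ▸ neg_sum_mul_mem_Icc (v := v)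
    (range (j + d + 1)) fun k _ => hc (j + d + 1) k
  rw [fibBound, ← add_assoc, abs_le]
  exact ⟨by linarith, by linarith⟩

end FibonacciBound

section Toeplitz

variable {R : Type*}

noncomputable def lowerToeplitz [Semiring R] (n : ℕ) (f : PowerSeries R) :
    Matrix (Fin n) (Fin n) R :=
  of fun i j => if j ≤ i then coeff ((i : ℕ) - j) f else 0

theorem lowerToeplitz_one [Semiring R] (n : ℕ) : lowerToeplitz n (1 : PowerSeries R) = 1 := by
  ext i j
  simp only [lowerToeplitz, of_apply, coeff_one, one_apply]
  split_ifs <;> first | rfl | omega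

theorem lowerToeplitz_mul [Semiring R] (n : ℕ) (f g : PowerSeries R) :
    lowerToeplitz n (f * g) = lowerToeplitz n f * lowerToeplitz n g := by
  ext i j
  set F : ℕ → R := fun k =>
    if k ≤ i ∧ (j : ℕ) ≤ k then coeff (i - k) f * coeff (k - j) g else 0
  have hF (k : Fin n) : lowerToeplitz n f i k * lowerToeplitz n g k j = F k := by
    simp only [lowerToeplitz, of_apply, F, Fin.le_def]
    split_ifs <;> simp_all
  rw [mul_apply, sum_congr rfl fun k _ => hF k, Fin.sum_univ_eq_sum_range F n,
    ← sum_subset (s₁ := Ico (j : ℕ) (i + 1)) (fun k hk => by simp at hk ⊢; omega)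
      (fun k _ hk => by simp only [F, mem_Ico] at hk ⊢; rw [if_neg (by omega)])]
  simp only [lowerToeplitz, of_apply, coeff_mul, Fin.le_def]
  split_ifs with hji
  -- `k ↦ (i - k, k - j)` identifies `[j, i]` with the antidiagonal of `i - j`
  · refine sum_nbij' (fun p => i - p.1) (fun k => (i - k, k - j)) ?_ ?_ ?_ ?_ ?_ <;>
      simp only [HasAntidiagonal.mem_antidiagonal, mem_Ico, Prod.forall, Prod.mk.injEq] <;>
      try omega
    intro a b hab
    simp only [F, if_pos (show (i : ℕ) - a ≤ i ∧ (j : ℕ) ≤ i - a by omega)]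
    rw [show (i : ℕ) - (i - a) = a by omega, show (i : ℕ) - a - j = b by omega]
  · exact (sum_eq_zero fun k hk => by simp at hk; omega).symm

theorem lowerToeplitz_rescale_neg_one [CommRing R] (n : ℕ) (f : PowerSeries R) :
    lowerToeplitz n (rescale (-1) f) =
      diagonal (fun i : Fin n => (-1) ^ (i : ℕ)) * lowerToeplitz n f *
        diagonal (fun i : Fin n => (-1) ^ (i : ℕ)) := by
  ext i j
  simp only [lowerToeplitz, diagonal_mul, mul_diagonal, of_apply, coeff_rescale]
  split_ifs with hji
  · obtain ⟨d, hd⟩ := Nat.exists_eq_add_of_le (Fin.le_def.1 hji)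
    rw [hd, Nat.add_sub_cancel_left, pow_add]
    ring_nf
    simp
  · simp

end Toeplitz

section Series

variable (R : Type*) [CommRing R]

noncomputable def extremalSeries : PowerSeries R :=
  mk fun k => if k = 0 ∨ k % 2 = 1 then 1 else 0

noncomputable def fibBoundSeries : PowerSeries R :=
  mk fun k => (fibBound k : R)

theorem lowerToeplitz_extremalSeries_apply {n : ℕ} (i j : Fin n) :
    lowerToeplitz n (extremalSeries R) i j =
      if i < j then 0 else if i = j then 1 else if (i : ℕ) % 2 ≠ (j : ℕ) % 2 then 1 else 0 := by
  simp only [lowerToeplitz, extremalSeries, of_apply, coeff_mk, Fin.lt_def, Fin.le_def,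
    Fin.ext_iff]
  split_ifs <;> first | rfl | omega

theorem extremalSeries_mul_one_sub_X_sq :
    extremalSeries R * (1 - X ^ 2) = 1 + X - X ^ 2 := by
  ext (_ | _ | _ | k) <;>
    simp only [mul_sub, mul_one, map_sub, map_add, coeff_mul_X_pow', coeff_one, coeff_X,
      coeff_X_pow, extremalSeries, coeff_mk]
  · simp
  · simp
  · simp
  · simp only [if_pos (by omega : 2 ≤ k + 3), show k + 3 - 2 = k + 1 by omega,
      show (k + 3) % 2 = (k + 1) % 2 by omega]
    simp

theorem rescale_fibBoundSeries_mul_one_add_X_sub_X_sq :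
    rescale (-1) (fibBoundSeries R) * (1 + X - X ^ 2) = 1 - X ^ 2 := by
  ext (_ | _ | _ | k) <;>
    simp only [mul_sub, mul_add, mul_one, map_sub, map_add, coeff_mul_X_pow', coeff_one,
      coeff_X_pow, coeff_succ_mul_X, coeff_zero_mul_X, coeff_rescale, fibBoundSeries, coeff_mk]
  · simp [fibBound]
  · simp [fibBound]
  · simp [fibBound]
  · simp only [if_pos (by omega : 2 ≤ k + 3), show k + 3 - 2 = k + 1 by omega, fibBound,
      Nat.fib_add_two (n := k + 1), pow_succ]
    simp
    ring

theorem extremalSeries_mul_rescale_fibBoundSeries :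
    extremalSeries R * rescale (-1) (fibBoundSeries R) = 1 := by
  have hu : IsUnit (1 + X - X ^ 2 : PowerSeries R) := by
    rw [isUnit_iff_constantCoeff]
    simp
  rw [← hu.mul_left_inj, mul_assoc, rescale_fibBoundSeries_mul_one_add_X_sub_X_sq,
    extremalSeries_mul_one_sub_X_sq, one_mul]

end Series

namespace Matrix

variable {R : Type*} {n : ℕ}

def natExtend [Zero R] (M : Matrix (Fin n) (Fin n) R) (a b : ℕ) : R :=
  if h : a < n ∧ b < n then M ⟨a, h.1⟩ ⟨b, h.2⟩ else 0

@[simp]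
theorem natExtend_apply [Zero R] (M : Matrix (Fin n) (Fin n) R) (a b : Fin n) :
    M.natExtend a b = M a b := by
  simp [natExtend]

theorem IsLowerTriangular.mul_apply_eq_sum_range [Semiring R] {Y : Matrix (Fin n) (Fin n) R}
    (hY : Y.IsLowerTriangular) (V : Matrix (Fin n) (Fin n) R) (a b : Fin n) :
    (Y * V) a b = ∑ k ∈ range (a + 1), Y.natExtend a k * V.natExtend k b := by
  have hsum := Fin.sum_univ_eq_sum_range (fun k => Y.natExtend a k * V.natExtend k b) n
  simp only [natExtend_apply] at hsum
  rw [mul_apply, hsum]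
  refine (sum_subset (fun k hk => by simp at hk ⊢; omega) fun k hk hka => ?_).symm
  simp only [mem_range] at hk hka
  rw [natExtend, dif_pos ⟨a.2, hk⟩]
  exact mul_eq_zero_of_left (hY (OrderDual.toDual_lt_toDual.2 (Fin.lt_def.2 (by simp; omega)))) _

end Matrix

theorem abs_inv_apply_le_lowerToeplitz {α : Type*} [Field α] [LinearOrder α]
    [IsStrictOrderedRing α] {n : ℕ} {Y : Matrix (Fin n) (Fin n) α} (hY : Y.IsLowerTriangular)
    (hY01 : ∀ i j, Y i j ∈ Set.Icc 0 1) (hdiag : ∀ i, Y i i = 1) (i j : Fin n) :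
    |Y⁻¹ i j| ≤ lowerToeplitz n (fibBoundSeries α) i j := by
  have hdet : IsUnit Y.det := by simp [det_of_isLowerTriangular _ hY, hdiag]
  have hV : Y⁻¹.IsLowerTriangular :=
    have := Y.invertibleOfIsUnitDet hdet
    blockTriangular_inv_of_blockTriangular hY
  by_cases hji : j ≤ i
  swap
  · simp [lowerToeplitz, hji, hV (OrderDual.toDual_lt_toDual.2 (not_le.1 hji))]
  set v : ℕ → α := fun k => Y⁻¹.natExtend k j
  have hrow (a : Fin n) :
      ∑ k ∈ range a, Y.natExtend a k * v k + v a = if a = j then 1 else 0 := by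
    rw [← one_apply, ← mul_nonsing_inv Y hdet, IsLowerTriangular.mul_apply_eq_sum_range hY,
      sum_range_succ]
    simp [v, hdiag]
  have hlow : ∀ k < (j : ℕ), v k = 0 := by
    intro k hk
    simp only [v, natExtend]
    split_ifs
    exacts [hV (OrderDual.toDual_lt_toDual.2 (Fin.lt_def.2 hk)), rfl]
  have hj : v j = 1 := by
    have hprefix : ∑ k ∈ range j, Y.natExtend j k * v k = 0 :=
      sum_eq_zero fun k hk => by rw [hlow k (mem_range.1 hk), mul_zero]
    simpa [hprefix] using hrow j
  have hc (a b : ℕ) : Y.natExtend a b ∈ Set.Icc 0 1 := by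
    unfold natExtend
    split_ifs
    exacts [hY01 _ _, ⟨le_rfl, zero_le_one⟩]
  have hrec (m : ℕ) (hjm : j < m) (hm : m < n) :
      v m = -∑ k ∈ range m, Y.natExtend m k * v k := by
    have := hrow ⟨m, hm⟩
    rw [if_neg (Fin.ne_of_gt hjm)] at this
    linarith
  have key := abs_le_fibBound_of_eq_neg_sum hc hlow (by simp [hj]) hrec (i - j) (by omega)
  rw [show (j : ℕ) + (i - j) = i by omega] at key
  simpa [v, lowerToeplitz, hji, fibBoundSeries] using key

section L2OpNorm

open scoped Matrix.Norms.L2Operator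

variable {𝕜 : Type*} [RCLike 𝕜] {m n : Type*} [Fintype m] [Fintype n] [DecidableEq n]

theorem diagonal_mem_unitary {s : n → 𝕜} (hs : ∀ i, ‖s i‖ = 1) :
    diagonal s ∈ unitary (Matrix n n 𝕜) := by
  rw [← unitaryGroup, mem_unitaryGroup_iff, star_eq_conjTranspose, diagonal_conjTranspose,
    diagonal_mul_diagonal, ← diagonal_one]
  congr 1
  ext i
  rw [Pi.star_apply, RCLike.star_def, RCLike.mul_conj, hs, RCLike.ofReal_one, one_pow]

theorem l2_opNorm_diagonal_mul_mul_diagonal (A : Matrix n n 𝕜) {s t : n → 𝕜}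
    (hs : ∀ i, ‖s i‖ = 1) (ht : ∀ i, ‖t i‖ = 1) :
    ‖diagonal s * A * diagonal t‖ = ‖A‖ := by
  rw [CStarRing.norm_mul_mem_unitary _ (diagonal_mem_unitary ht),
    CStarRing.norm_mem_unitary_mul _ (diagonal_mem_unitary hs)]

theorem l2_opNorm_le_of_norm_apply_le {A : Matrix m n 𝕜} {B : Matrix m n ℝ}
    (h : ∀ i j, ‖A i j‖ ≤ B i j) : ‖A‖ ≤ ‖B.map (algebraMap ℝ 𝕜)‖ := by
  rw [l2_opNorm_def]
  refine ContinuousLinearMap.opNorm_le_bound _ (norm_nonneg _) fun x => ?_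
  set y : EuclideanSpace 𝕜 n := WithLp.toLp 2 fun j => (‖x j‖ : 𝕜)
  have hy : ‖y‖ = ‖x‖ := by simp [y, EuclideanSpace.norm_eq]
  have hrow (i : m) : ‖(A *ᵥ x) i‖ ≤ ‖(B.map (algebraMap ℝ 𝕜) *ᵥ y) i‖ := by
    have hB (j : n) : 0 ≤ B i j * ‖x j‖ :=
      mul_nonneg ((norm_nonneg _).trans (h i j)) (norm_nonneg _)
    calc ‖(A *ᵥ x) i‖ ≤ ∑ j, ‖A i j‖ * ‖x j‖ := by
          simpa only [mulVec, dotProduct, norm_mul] using norm_sum_le univ fun j => A i j * x j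
      _ ≤ ∑ j, B i j * ‖x j‖ := by gcongr with j; exact h i j
      _ = ‖(B.map (algebraMap ℝ 𝕜) *ᵥ y) i‖ := by
          simp only [mulVec, dotProduct, map_apply, y, RCLike.algebraMap_eq_ofReal,
            ← RCLike.ofReal_mul, ← RCLike.ofReal_sum, RCLike.norm_ofReal]
          exact (abs_of_nonneg (sum_nonneg fun j _ => hB j)).symm
  calc _ ≤ ‖(EuclideanSpace.equiv m 𝕜).symm (B.map (algebraMap ℝ 𝕜) *ᵥ y)‖ := by
        simp only [EuclideanSpace.norm_eq]
        gcongr with i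
        exact hrow i
    _ ≤ _ := by rw [← hy]; exact l2_opNorm_mulVec _ _

theorem specRad_transpose_mul_self {n : ℕ} (V : Matrix (Fin n) (Fin n) ℝ) :
    specRad (Vᵀ * V) = (‖V.map (algebraMap ℝ ℂ)‖₊ : ℝ≥0∞) ^ 2 := by
  have hstar : (Vᵀ * V).map (algebraMap ℝ ℂ) =
      star (V.map (algebraMap ℝ ℂ)) * V.map (algebraMap ℝ ℂ) := by
    rw [Matrix.map_mul, star_eq_conjTranspose, conjTranspose, transpose_map]
    congr 1
    ext
    simp
  rw [specRad, hstar, (IsSelfAdjoint.star_mul_self _).spectralRadius_eq_nnnorm,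
    CStarRing.nnnorm_star_mul_self, ENNReal.coe_mul, sq]

end L2OpNorm

/-- `ρ(Z⁻¹) ≤ ρ(Z₀⁻¹)` for `Z = YYᵀ`, `Y` lower triangular (0,1) with unit
diagonal, and `Z₀ = Y₀Y₀ᵀ`. -/
theorem stmt_16 (n : ℕ) (Y : Matrix (Fin n) (Fin n) ℝ)
    (hlower : ∀ i j, i < j → Y i j = 0)
    (h01 : ∀ i j, Y i j = 0 ∨ Y i j = 1)
    (hdiag : ∀ i, Y i i = 1)
    (Z : Matrix (Fin n) (Fin n) ℝ) (hZ : Z = Y * Yᵀ)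
    (Y₀ : Matrix (Fin n) (Fin n) ℝ)
    (hY₀ : ∀ i j : Fin n, Y₀ i j =
      if i < j then 0 else if i = j then 1 else
        if (i : ℕ) % 2 ≠ (j : ℕ) % 2 then 1 else 0)
    (Z₀ : Matrix (Fin n) (Fin n) ℝ) (hZ₀ : Z₀ = Y₀ * Y₀ᵀ) :
    specRad Z⁻¹ ≤ specRad Z₀⁻¹ := by
  have hY₀_inv : Y₀⁻¹ = lowerToeplitz n (rescale (-1) (fibBoundSeries ℝ)) := by
    have hY₀_eq : Y₀ = lowerToeplitz n (extremalSeries ℝ) := by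
      ext i j
      rw [hY₀, lowerToeplitz_extremalSeries_apply]
    rw [hY₀_eq]
    exact inv_eq_right_inv <| by
      rw [← lowerToeplitz_mul, extremalSeries_mul_rescale_fibBoundSeries, lowerToeplitz_one]
  have hY01 (i j : Fin n) : Y i j ∈ Set.Icc 0 1 := by
    rcases h01 i j with h | h <;> simp [h]
  open scoped Matrix.Norms.L2Operator in
  have hnorm : ‖(Y⁻¹).map (algebraMap ℝ ℂ)‖ ≤ ‖(Y₀⁻¹).map (algebraMap ℝ ℂ)‖ :=
    calc _ ≤ ‖(lowerToeplitz n (fibBoundSeries ℝ)).map (algebraMap ℝ ℂ)‖ :=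
          l2_opNorm_le_of_norm_apply_le fun i j => by
            simpa using abs_inv_apply_le_lowerToeplitz (fun i j h => hlower i j h) hY01 hdiag i j
      _ = _ := by
          rw [hY₀_inv, lowerToeplitz_rescale_neg_one, Matrix.map_mul, Matrix.map_mul,
            diagonal_map (map_zero _), l2_opNorm_diagonal_mul_mul_diagonal] <;> simp
  rw [hZ, hZ₀, Matrix.mul_inv_rev, Matrix.mul_inv_rev, ← transpose_nonsing_inv,
    ← transpose_nonsing_inv, specRad_transpose_mul_self, specRad_transpose_mul_self]
  gcongr
  exact hnorm
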